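/- Fix an integer t ≥ 2 and set D(q,w) = 1 − b(q,1,1,w) = Σ_{j≥0} (−1)^j w^j ∏_{i=1}^{j} q^{h_i}/(1−q^{h_i}). Let w = e^{iφ} with φ real and √(97/96)·π·2^{−t/2} < |φ| ≤ π. Then every zero z_0 of the function z ↦ D(1/z, w) satisfies |z_0| < 2 − 1/2^t. -/

import Mathlib

open scoped BigOperators
open Filter MeasureTheory

noncomputable section

/-- `hp t j = 1 + t + ⋯ + t^(j-1) = (t^j - 1)/(t-1)`. -/
def hp (t j : ℕ) : ℕ := ∑ i ∈ Finset.range j, t ^ i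

/-- The series `b(q,u,v,w)`
`b = Σ_{j≥1} v q^{h_j} u^{t^j} w^j/(1−q^{h_j} u^{t^j}) ∏_{i=1}^{j−1} (1−v−q^{h_i}u^{t^i})/(1−q^{h_i}u^{t^i})`. -/
def bGF (t : ℕ) (q u v w : ℂ) : ℂ :=
  ∑' j : ℕ,
    v * q ^ hp t (j + 1) * u ^ t ^ (j + 1) * w ^ (j + 1) /
        (1 - q ^ hp t (j + 1) * u ^ t ^ (j + 1)) *
      ∏ i ∈ Finset.Icc 1 j,
        (1 - v - q ^ hp t i * u ^ t ^ i) / (1 - q ^ hp t i * u ^ t ^ i)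

/-- The series `a(q,u,v,w)` (for canonical forests with `r` roots)
`a = Σ_{j≥0} v q^{r h_j} u^{r t^j} w^j ∏_{i=1}^{j} (1−v−q^{h_i}u^{t^i})/(1−q^{h_i}u^{t^i})`. -/
def aGF (t r : ℕ) (q u v w : ℂ) : ℂ :=
  ∑' j : ℕ,
    v * q ^ (r * hp t j) * u ^ (r * t ^ j) * w ^ j *
      ∏ i ∈ Finset.Icc 1 j,
        (1 - v - q ^ hp t i * u ^ t ^ i) / (1 - q ^ hp t i * u ^ t ^ i)

/-- A canonical `t`-ary forest with `r` (ordered) roots, encoded by its sequence of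
numbers of internal vertices on each level (a canonical forest is uniquely determined
by this sequence: on each level the leaves come first, since outdegrees read from left
to right are non-decreasing).  The number `c_0` of internal vertices on level `0` is at
most `r`, each level's internal-vertex count satisfies `1 ≤ c_{k+1} ≤ t·c_k`, and the
list stops at the last level containing internal vertices. -/
structure CanonicalForest (t r : ℕ) where
  levels : List ℕ
  pos : ∀ c ∈ levels, 0 < c
  head_le : ∀ c ∈ levels.head?, c ≤ r
  chain : levels.Chain' fun a b => b ≤ t * a

namespace CanonicalForest

variable {t r : ℕ} (T : CanonicalForest t r)

/-- the number `n(T)` of internal vertices -/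
def size : ℕ := T.levels.sum

/-- the height `h(T)`: the maximal distance of a leaf from the root level -/
def height : ℕ := T.levels.length

/-- the number of internal vertices at depth `k` -/
def internAt (k : ℕ) : ℕ := T.levels.getD k 0

/-- the number of vertices at depth `k` -/
def vertsAt (k : ℕ) : ℕ := if k = 0 then r else t * T.internAt (k - 1)

/-- the number of leaves at depth `k` -/
def leavesAt (k : ℕ) : ℕ := T.vertsAt k - T.internAt k

/-- the number `m(T)` of leaves at maximal depth -/
def lastLeaves : ℕ := T.vertsAt T.height

/-- the number `d(T)` of distinct depths at which leaves occur -/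
def distinctDepths : ℕ :=
  ((Finset.range (T.height + 1)).filter fun k => 0 < T.leavesAt k).card

/-- the (leaf-)width `w(T)`: the maximal number of leaves on one level -/
def width : ℕ := (Finset.range (T.height + 1)).sup fun k => T.leavesAt k

/-- the total path length `ℓ(T)`: the sum of the depths of all vertices -/
def pathLength : ℕ := ∑ k ∈ Finset.range (T.height + 1), k * T.vertsAt k

end CanonicalForest

/-- the number of canonical `t`-ary forests with `r` roots and `n` internal vertices -/
def forestCount (t r n : ℕ) : ℕ := Nat.card {T : CanonicalForest t r // T.size = n}

/-- the probability of an event under the uniform distribution on canonical `t`-ary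
forests with `r` roots and `n` internal vertices -/
def forestProb (t r n : ℕ) (s : Set (CanonicalForest t r)) : ℝ :=
  (Nat.card {T : CanonicalForest t r // T.size = n ∧ T ∈ s} : ℝ) / forestCount t r n

/-- the expectation of a random variable under the uniform distribution on canonical
`t`-ary forests with `r` roots and `n` internal vertices -/
def forestExp (t r n : ℕ) (f : CanonicalForest t r → ℝ) : ℝ :=
  (∑ᶠ T : {T : CanonicalForest t r // T.size = n}, f T.1) / forestCount t r n

/-- the variance of a random variable under the uniform distribution on canonical
`t`-ary forests with `r` roots and `n` internal vertices -/
def forestVar (t r n : ℕ) (f : CanonicalForest t r → ℝ) : ℝ :=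
  forestExp t r n (fun T => f T ^ 2) - forestExp t r n f ^ 2

/-- the distribution function of the standard normal distribution -/
def stdGaussCDF (x : ℝ) : ℝ :=
  (Real.sqrt (2 * Real.pi))⁻¹ * ∫ u in Set.Iic x, Real.exp (-u ^ 2 / 2)

/-- the density of the standard normal distribution -/
def stdGaussPDF (x : ℝ) : ℝ :=
  (Real.sqrt (2 * Real.pi))⁻¹ * Real.exp (-x ^ 2 / 2)

/-! Put `q = 1/z₀`, `w = e^{iφ}`, `E = 2^{-t}` and `rᵢ = q^{hᵢ}/(1 - q^{hᵢ})`, so that the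
series is `∑ⱼ ∏_{i ≤ j} (-w rᵢ)`. If `‖z₀‖ ≥ 2 - E`, Bernoulli's inequality gives
`‖q‖^{t+1} ≤ 1/(2^t + 1)`, hence `‖r₂‖ ≤ E`, while `‖rᵢ‖ ≤ 1/49` for `i ≥ 3`. Vanishing of
the series then pins down `(-w r₁)⁻¹ = -(1 + tail)` with `‖tail‖ ≤ (49/48) E`, that is,
`‖z₀ - (1 + w)‖ ≤ (49/48) E`. For `|φ|` above the threshold, however,
`‖1 + w‖² = 2 + 2 cos φ < (2 - (97/48) E)²`, contradicting `‖z₀‖ ≥ 2 - E`. -/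

open Finset

lemma prod_Icc_one_eq_prod_range {M : Type*} [CommMonoid M] (f : ℕ → M) (n : ℕ) :
    ∏ i ∈ Icc 1 n, f i = ∏ i ∈ range n, f (i + 1) := by
  rw [range_eq_Ico, prod_Ico_add', zero_add, Ico_add_one_right_eq_Icc]

lemma norm_div_one_sub_le {𝕜 : Type*} [NormedDivisionRing 𝕜] {a : 𝕜} {c : ℝ}
    (ha : ‖a‖ ≤ c) (hc : c < 1) : ‖a / (1 - a)‖ ≤ c / (1 - c) := by
  have h : 1 - c ≤ ‖1 - a‖ := by
    have := norm_sub_norm_le (1 : 𝕜) a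
    rw [norm_one] at this
    linarith
  rw [norm_div]
  exact div_le_div₀ ((norm_nonneg a).trans ha) ha (by linarith) h

theorem norm_inv_add_one_le_of_hasSum_prod_range_eq_zero {𝕜 : Type*} [NormedField 𝕜]
    {s : ℕ → 𝕜} {ε ρ : ℝ} (hsum : HasSum (fun j => ∏ i ∈ range j, s i) 0)
    (h1 : ‖s 1‖ ≤ ε) (hρ : ∀ i, 2 ≤ i → ‖s i‖ ≤ ρ) (hρ1 : ρ < 1) :
    ‖(s 0)⁻¹ + 1‖ ≤ ε / (1 - ρ) := by
  set g : ℕ → 𝕜 := fun n => ∏ i ∈ range n, s (i + 1)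
  have hg : HasSum (fun n => s 0 * g n) (-1) := by
    have := (hasSum_nat_add_iff' 1).2 hsum
    simpa [prod_range_succ', g, mul_comm] using this
  have hs0 : s 0 ≠ 0 := by
    rintro h
    simp only [h, zero_mul] at hg
    exact one_ne_zero (neg_eq_zero.1 (hasSum_zero.unique hg).symm)
  have hg' : HasSum (fun n => g (n + 1)) (-(s 0)⁻¹ - 1) := by
    have := hg.mul_left (s 0)⁻¹
    simp only [← mul_assoc, inv_mul_cancel₀ hs0, one_mul, mul_neg_one] at this
    simpa [g] using (hasSum_nat_add_iff' 1).2 this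
  have hρ0 : 0 ≤ ρ := (norm_nonneg _).trans (hρ 2 le_rfl)
  have htail : ∀ n, ‖g (n + 1)‖ ≤ ε * ρ ^ n := by
    intro n
    simp only [g, prod_range_succ', norm_mul, norm_prod]
    rw [mul_comm]
    refine mul_le_mul h1 ?_ (prod_nonneg fun _ _ => norm_nonneg _) ((norm_nonneg _).trans h1)
    simpa using prod_le_prod (s := range n) (fun i _ => norm_nonneg _)
      fun i _ => hρ (i + 1 + 1) (by omega)
  have := hg'.norm_le_of_bounded ((hasSum_geometric_of_lt_one hρ0 hρ1).mul_left ε) htail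
  rwa [← neg_add', norm_neg, ← div_eq_mul_inv] at this

lemma hp_one (t : ℕ) : hp t 1 = 1 := by simp [hp]

lemma hp_two (t : ℕ) : hp t 2 = 1 + t := by simp [hp, sum_range_succ]

lemma hp_three (t : ℕ) : hp t 3 = 1 + t + t ^ 2 := by simp [hp, sum_range_succ]

lemma hp_mono (t : ℕ) : Monotone (hp t) :=
  fun _ _ h => sum_le_sum_of_subset (range_subset_range.2 h)

lemma succ_le_hp {t i : ℕ} (hi : 2 ≤ i) : t + 1 ≤ hp t i := by
  have := hp_mono t hi
  rw [hp_two] at this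
  omega

lemma add_two_le_two_pow {t : ℕ} (ht : 2 ≤ t) : t + 2 ≤ 2 ^ t := by
  obtain ⟨k, rfl⟩ := Nat.exists_eq_add_of_le' ht
  have : k < 2 ^ k := Nat.lt_two_pow_self
  rw [pow_add]
  omega

lemma two_pow_add_one_le_two_sub_pow {t : ℕ} (ht : 2 ≤ t) :
    (2 : ℝ) ^ t + 1 ≤ (2 - 1 / 2 ^ t) ^ (t + 1) := by
  set E : ℝ := 1 / 2 ^ t
  have hE1 : E ≤ 1 := div_le_one_of_le₀ (one_le_pow₀ one_le_two) (by positivity)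
  have hE2 : 2 ^ t * E = 1 := mul_one_div_cancel (by positivity)
  have hbernoulli := one_add_mul_le_pow (a := -(E / 2)) (by linarith) (t + 1)
  have hcount : (t : ℝ) + 2 ≤ 2 ^ t := by exact_mod_cast add_two_le_two_pow ht
  calc (2 : ℝ) ^ t + 1 ≤ 2 ^ (t + 1) * (1 + ((t + 1 : ℕ) : ℝ) * -(E / 2)) := by
        push_cast; rw [pow_succ]; linear_combination hcount + (t + 1) * hE2
    _ ≤ 2 ^ (t + 1) * (1 + -(E / 2)) ^ (t + 1) := by gcongr
    _ = (2 - E) ^ (t + 1) := by rw [← mul_pow]; ring_nf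

section PowHpDivOneSub

variable {𝕜 : Type*} [NormedDivisionRing 𝕜] {t : ℕ} {q : 𝕜}

lemma norm_pow_hp_div_one_sub_le_of_two_le (ht : 2 ≤ t) (hq : ‖q‖ ≤ 1 / (2 - 1 / 2 ^ t))
    {i : ℕ} (hi : 2 ≤ i) : ‖q ^ hp t i / (1 - q ^ hp t i)‖ ≤ 1 / 2 ^ t := by
  have hE : (1 : ℝ) / 2 ^ t ≤ 1 :=
    div_le_one_of_le₀ (one_le_pow₀ one_le_two) (by positivity)
  have hq1 : ‖q‖ ≤ 1 := hq.trans (by rw [div_le_one (by linarith)]; linarith)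
  have hpow : ‖q ^ hp t i‖ ≤ 1 / (2 ^ t + 1) := calc
    ‖q ^ hp t i‖ ≤ ‖q‖ ^ (t + 1) := by
      rw [norm_pow]; exact pow_le_pow_of_le_one (norm_nonneg q) hq1 (succ_le_hp hi)
    _ ≤ (1 / (2 - 1 / 2 ^ t)) ^ (t + 1) := pow_le_pow_left₀ (norm_nonneg q) hq _
    _ ≤ 1 / (2 ^ t + 1) := by
      rw [div_pow, one_pow]
      exact one_div_le_one_div_of_le (by positivity) (two_pow_add_one_le_two_sub_pow ht)
  refine (norm_div_one_sub_le hpow ?_).trans_eq ?_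
  · rw [div_lt_one (by positivity)]; linarith [pow_pos (two_pos (α := ℝ)) t]
  · field_simp; ring

lemma norm_pow_hp_div_one_sub_le_of_three_le (ht : 2 ≤ t) (hq : ‖q‖ ≤ 1 / (2 - 1 / 2 ^ t))
    {i : ℕ} (hi : 3 ≤ i) : ‖q ^ hp t i / (1 - q ^ hp t i)‖ ≤ 1 / 49 := by
  have hE : (1 : ℝ) / 2 ^ t ≤ 1 / 4 := by
    gcongr; exact le_trans (by norm_num) (pow_le_pow_right₀ one_le_two ht)
  have hq47 : ‖q‖ ≤ 4 / 7 :=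
    hq.trans (by rw [div_le_div_iff₀ (by linarith) (by norm_num)]; linarith)
  have hhp : 7 ≤ hp t i := by
    have := hp_mono t hi
    rw [hp_three] at this
    nlinarith
  have hpow : ‖q ^ hp t i‖ ≤ 1 / 50 := calc
    ‖q ^ hp t i‖ ≤ (4 / 7 : ℝ) ^ hp t i := by
      rw [norm_pow]; exact pow_le_pow_left₀ (norm_nonneg q) hq47 _
    _ ≤ (4 / 7) ^ 7 := pow_le_pow_of_le_one (by norm_num) (by norm_num) hhp
    _ ≤ 1 / 50 := by norm_num
  exact (norm_div_one_sub_le hpow (by norm_num)).trans_eq (by norm_num)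

end PowHpDivOneSub

lemma norm_one_add_exp_mul_I_sq (φ : ℝ) :
    ‖1 + Complex.exp (φ * Complex.I)‖ ^ 2 = 2 + 2 * Real.cos φ := by
  rw [Complex.sq_norm, Complex.normSq_apply, Complex.add_re, Complex.add_im, Complex.one_re,
    Complex.one_im, Complex.exp_ofReal_mul_I_re, Complex.exp_ofReal_mul_I_im]
  linear_combination Real.sin_sq_add_cos_sq φ

lemma cos_le_one_sub_two_mul_sq {y : ℝ} (hy0 : 0 ≤ y) (hy : y ≤ 2) :
    Real.cos y ≤ 1 - 2 * (y / 2 - (y / 2) ^ 3 / 6) ^ 2 := by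
  have hsin := Real.sin_ge_sub_cube (x := y / 2) (by linarith)
  have hcos : Real.cos y = 1 - 2 * Real.sin (y / 2) ^ 2 := by
    conv_lhs => rw [show y = 2 * (y / 2) by ring]
    rw [Real.cos_two_mul, Real.cos_sq']
    ring
  have hpos : 0 ≤ y / 2 - (y / 2) ^ 3 / 6 := by
    nlinarith [mul_nonneg hy0 (by nlinarith : (0 : ℝ) ≤ 24 - y ^ 2)]
  rw [hcos]
  nlinarith [pow_le_pow_left₀ hpos hsin 2]

-- `97 / 48 = 1 + 49 / 48`, where `(49 / 48) E` bounds the tail of the zero series.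
lemma two_add_two_cos_lt {E y : ℝ} (hE0 : 0 < E) (hE : E ≤ 1 / 4) (hy0 : 0 ≤ y)
    (hy : y ^ 2 = 97 / 96 * Real.pi ^ 2 * E) : 2 + 2 * Real.cos y < (2 - 97 / 48 * E) ^ 2 := by
  have hπ := Real.pi_gt_d2
  have hπ' := Real.pi_lt_d2
  have hπ2 : 9.8596 ≤ Real.pi ^ 2 := by nlinarith
  have hπ2' : Real.pi ^ 2 ≤ 9.9225 := by nlinarith
  have hy2 : y ≤ 2 := by nlinarith
  have hcos : 2 + 2 * Real.cos y ≤ 4 - y ^ 2 * (1 - y ^ 2 / 24) ^ 2 := by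
    have := cos_le_one_sub_two_mul_sq hy0 hy2
    have hsq : (y / 2 - (y / 2) ^ 3 / 6) ^ 2 = y ^ 2 / 4 * (1 - y ^ 2 / 24) ^ 2 := by ring
    linarith
  have hmono : 9.96 * E * (1 - 10.03 * E / 24) ^ 2 ≤ y ^ 2 * (1 - y ^ 2 / 24) ^ 2 := by
    rw [hy]
    gcongr
    · nlinarith
    · nlinarith
    · nlinarith
  have hpoly : 0 < 9.96 * (1 - 10.03 * E / 24) ^ 2 - 97 / 12 + (97 / 48) ^ 2 * E := by
    nlinarith
  nlinarith [mul_pos hE0 hpoly]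

lemma sq_outer_threshold (t : ℕ) :
    (Real.sqrt (97 / 96) * Real.pi * 2 ^ (-(t : ℝ) / 2)) ^ 2 =
      97 / 96 * Real.pi ^ 2 * (1 / 2 ^ t) := by
  have h : ((2 : ℝ) ^ (-(t : ℝ) / 2)) ^ 2 = 1 / 2 ^ t := by
    rw [← Real.rpow_mul_natCast (by norm_num), Nat.cast_two, div_mul_cancel₀ _ two_ne_zero,
      Real.rpow_neg (by norm_num), Real.rpow_natCast, one_div]
  rw [mul_pow, mul_pow, Real.sq_sqrt (by norm_num), h]

/-- Outer region: for `w = e^{iφ}` with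
`√(97/96)·π·2^{−t/2} < |φ| ≤ π`, every zero `z₀` of `z ↦ D(1/z, w)`, where
`D(q,w) = 1 − b(q,1,1,w) = Σ_{j≥0} (−1)^j w^j ∏_{i=1}^{j} q^{h_i}/(1−q^{h_i})`
(a zero meaning that the series converges to `0` at `q = 1/z₀`),
has absolute value smaller than `2 − 1/2^t`. -/
theorem outer_region_zero_bound (t : ℕ) (ht : 2 ≤ t) (φ : ℝ)
    (hlow : Real.sqrt (97/96) * Real.pi * 2 ^ (-(t : ℝ)/2) < |φ|)
    (hup : |φ| ≤ Real.pi) (z₀ : ℂ)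
    (hzero : HasSum
      (fun j : ℕ => (-1 : ℂ) ^ j * Complex.exp (φ * Complex.I) ^ j *
        ∏ i ∈ Finset.Icc 1 j, (1/z₀) ^ hp t i / (1 - (1/z₀) ^ hp t i))
      0) :
    ‖z₀‖ < 2 - 1/2^t := by
  set w := Complex.exp (φ * Complex.I)
  set E : ℝ := 1 / 2 ^ t
  have hw : ‖w‖ = 1 := Complex.norm_exp_ofReal_mul_I φ
  have hE0 : 0 < E := by positivity
  have hE : E ≤ 1 / 4 := one_div_le_one_div_of_le (by norm_num)
    (le_trans (by norm_num) (pow_le_pow_right₀ one_le_two ht))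
  by_contra! hfar
  have hq : ‖1 / z₀‖ ≤ 1 / (2 - E) := by
    rw [norm_div, norm_one]; exact one_div_le_one_div_of_le (by linarith) hfar
  set s : ℕ → ℂ := fun i => -w * ((1 / z₀) ^ hp t (i + 1) / (1 - (1 / z₀) ^ hp t (i + 1)))
  have hsum : HasSum (fun j => ∏ i ∈ range j, s i) 0 := by
    convert hzero using 2 with j
    rw [prod_Icc_one_eq_prod_range, prod_mul_distrib, prod_const, card_range, neg_pow]
  have hnear := norm_inv_add_one_le_of_hasSum_prod_range_eq_zero hsum (ε := E) (ρ := 1 / 49)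
    (by simpa only [s, norm_mul, norm_neg, hw, one_mul] using
      norm_pow_hp_div_one_sub_le_of_two_le ht hq le_rfl)
    (fun i hi => by
      simpa only [s, norm_mul, norm_neg, hw, one_mul] using
        norm_pow_hp_div_one_sub_le_of_three_le ht hq (by omega : 3 ≤ i + 1))
    (by norm_num)
  have hz₀ : z₀ ≠ 0 := by rintro rfl; simp at hfar; linarith
  have hz₁ : z₀ - 1 ≠ 0 := by
    intro h; rw [sub_eq_zero.1 h, norm_one] at hfar; linarith
  have hs0 : (s 0)⁻¹ + 1 = (1 + w - z₀) / w := by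
    have hw0 : w ≠ 0 := Complex.exp_ne_zero _
    simp only [s, zero_add, hp_one, pow_one]
    field_simp
    ring
  rw [hs0, norm_div, hw, div_one, norm_sub_rev] at hnear
  have h1w : ‖1 + w‖ < 2 - 97 / 48 * E := by
    refine lt_of_pow_lt_pow_left₀ 2 (by linarith) ?_
    rw [norm_one_add_exp_mul_I_sq, ← Real.cos_abs φ]
    calc 2 + 2 * Real.cos |φ|
        ≤ 2 + 2 * Real.cos (Real.sqrt (97/96) * Real.pi * 2 ^ (-(t : ℝ)/2)) := by
          gcongr
          exact Real.cos_le_cos_of_nonneg_of_le_pi (by positivity) hup hlow.le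
      _ < _ := two_add_two_cos_lt hE0 hE (by positivity) (sq_outer_threshold t)
  have htriangle := norm_sub_norm_le z₀ (1 + w)
  have htail : E / (1 - 1 / 49) = 49 / 48 * E := by ring
  linarith

end
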